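/- Fix a nonzero complex number ℏ and complex numbers δ, δ′, c, and on holomorphic functions f of (u,v) ∈ ℂ² define the first-order differential operators L_u f = u f + (iℏ/2)(δ ∂_u f + (c−1) ∂_v f), L_v f = v f + (iℏ/2)((c+1) ∂_u f + δ′ ∂_v f), R_u f = u f + (iℏ/2)(δ ∂_u f + (c+1) ∂_v f), R_v f = v f + (iℏ/2)((c−1) ∂_u f + δ′ ∂_v f). Assume (1+c)² ≠ δδ′ and (1−c)² ≠ δδ′ and set ϖ₀₀(u,v) = exp( (1/(iℏ))·(δ′u² − 2(1+c)uv + δv²)/((1+c)² − δδ′) ) and ϖ̄₀₀(u,v) = exp( (1/(iℏ))·(δ′u² + 2(1−c)uv + δv²)/((1−c)² − δδ′) ). Then R_u(R_v ϖ₀₀) = iℏ·ϖ₀₀ and L_u(L_v ϖ̄₀₀) = −iℏ·ϖ̄₀₀; together with R_u ϖ₀₀ = 0 and L_u ϖ̄₀₀ = 0 this expresses the eigenvalue identities ϖ₀₀ ∗ (1/(iℏ))u∘v = ½ ϖ₀₀ and (1/(iℏ))u∘v ∗ ϖ̄₀₀ = −½ ϖ̄₀₀. -/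

import Mathlib

open Complex

/-- `K`-ordered expression of left ∗-multiplication by `u`. -/
noncomputable def Lu (ℏ δ δ' c : ℂ) (f : ℂ → ℂ → ℂ) (u v : ℂ) : ℂ :=
  u * f u v + (Complex.I * ℏ / 2) *
    (δ * deriv (fun x => f x v) u + (c - 1) * deriv (fun y => f u y) v)

/-- `K`-ordered expression of left ∗-multiplication by `v`. -/
noncomputable def Lv (ℏ δ δ' c : ℂ) (f : ℂ → ℂ → ℂ) (u v : ℂ) : ℂ :=
  v * f u v + (Complex.I * ℏ / 2) *
    ((c + 1) * deriv (fun x => f x v) u + δ' * deriv (fun y => f u y) v)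

/-- `K`-ordered expression of right ∗-multiplication by `u`. -/
noncomputable def Ru (ℏ δ δ' c : ℂ) (f : ℂ → ℂ → ℂ) (u v : ℂ) : ℂ :=
  u * f u v + (Complex.I * ℏ / 2) *
    (δ * deriv (fun x => f x v) u + (c + 1) * deriv (fun y => f u y) v)

/-- `K`-ordered expression of right ∗-multiplication by `v`. -/
noncomputable def Rv (ℏ δ δ' c : ℂ) (f : ℂ → ℂ → ℂ) (u v : ℂ) : ℂ :=
  v * f u v + (Complex.I * ℏ / 2) *
    ((c - 1) * deriv (fun x => f x v) u + δ' * deriv (fun y => f u y) v)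

/-! The vacuum is a Gaussian and `R_u`, `R_v` are first-order operators `m + κ (α ∂_u + β ∂_v)`
with `m` a coordinate. On a Gaussian such an operator acts as multiplication by a linear form,
which for `R_u` vanishes; `R_v ϖ₀₀ = ℓ ϖ₀₀` with `ℓ` linear, and the Leibniz rule
`R_u (ℓ f) = ℓ R_u f + κ (α ∂_u ℓ + β ∂_v ℓ) f` leaves only the constant
`κ (α ∂_u ℓ + β ∂_v ℓ) = iℏ`. The bar-vacuum is handled in the same way with `L_u`, `L_v`. -/

noncomputable def firstOrderOp (κ α β : ℂ) (m f : ℂ → ℂ → ℂ) (u v : ℂ) : ℂ :=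
  m u v * f u v + κ * (α * deriv (fun x => f x v) u + β * deriv (fun y => f u y) v)

section OperatorForms

variable (ℏ δ δ' c : ℂ)

theorem Lu_eq_firstOrderOp : Lu ℏ δ δ' c = firstOrderOp (I * ℏ / 2) δ (c - 1) fun u _ => u := rfl

theorem Lv_eq_firstOrderOp : Lv ℏ δ δ' c = firstOrderOp (I * ℏ / 2) (c + 1) δ' fun _ v => v := rfl

theorem Ru_eq_firstOrderOp : Ru ℏ δ δ' c = firstOrderOp (I * ℏ / 2) δ (c + 1) fun u _ => u := rfl

theorem Rv_eq_firstOrderOp : Rv ℏ δ δ' c = firstOrderOp (I * ℏ / 2) (c - 1) δ' fun _ v => v := rfl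

end OperatorForms

theorem firstOrderOp_linear_mul (κ α β p q : ℂ) (m f : ℂ → ℂ → ℂ) (u v : ℂ)
    (hu : DifferentiableAt ℂ (fun x => f x v) u) (hv : DifferentiableAt ℂ (fun y => f u y) v) :
    firstOrderOp κ α β m (fun x y => (p * x + q * y) * f x y) u v =
      (p * u + q * v) * firstOrderOp κ α β m f u v + κ * (α * p + β * q) * f u v := by
  have hu' : HasDerivAt (fun x => (p * x + q * v) * f x v)
      (p * f u v + (p * u + q * v) * deriv (fun x => f x v) u) u := by
    simpa using (((hasDerivAt_id' u).const_mul p).add_const (q * v)).fun_mul hu.hasDerivAt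
  have hv' : HasDerivAt (fun y => (p * u + q * y) * f u y)
      (q * f u v + (p * u + q * v) * deriv (fun y => f u y) v) v := by
    simpa using (((hasDerivAt_id' v).const_mul q).const_add (p * u)).fun_mul hv.hasDerivAt
  unfold firstOrderOp
  rw [hu'.deriv, hv'.deriv]
  ring

noncomputable def gaussian (A B C : ℂ) (u v : ℂ) : ℂ :=
  exp (A * u ^ 2 + B * u * v + C * v ^ 2)

section Gaussian

variable (A B C u v : ℂ)

theorem hasDerivAt_gaussian_fst :
    HasDerivAt (fun x => gaussian A B C x v) ((2 * A * u + B * v) * gaussian A B C u v) u := by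
  have hexponent : HasDerivAt (fun x => A * x ^ 2 + B * x * v + C * v ^ 2) (2 * A * u + B * v) u := by
    refine ((((hasDerivAt_pow 2 u).const_mul A).fun_add
      (((hasDerivAt_id' u).const_mul B).mul_const v)).add_const (C * v ^ 2)).congr_deriv ?_
    ring
  simpa only [gaussian, mul_comm] using hexponent.cexp

theorem hasDerivAt_gaussian_snd :
    HasDerivAt (fun y => gaussian A B C u y) ((B * u + 2 * C * v) * gaussian A B C u v) v := by
  have hexponent : HasDerivAt (fun y => A * u ^ 2 + B * u * y + C * y ^ 2) (B * u + 2 * C * v) v := by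
    refine ((((hasDerivAt_id' v).const_mul (B * u)).const_add (A * u ^ 2)).fun_add
      ((hasDerivAt_pow 2 v).const_mul C)).congr_deriv ?_
    ring
  simpa only [gaussian, mul_comm] using hexponent.cexp

theorem firstOrderOp_gaussian (κ α β : ℂ) (m : ℂ → ℂ → ℂ) :
    firstOrderOp κ α β m (gaussian A B C) u v =
      (m u v + κ * (α * (2 * A * u + B * v) + β * (B * u + 2 * C * v))) * gaussian A B C u v := by
  rw [firstOrderOp, (hasDerivAt_gaussian_fst A B C u v).deriv,
    (hasDerivAt_gaussian_snd A B C u v).deriv]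
  ring

theorem firstOrderOp_linear_mul_gaussian (κ α β p q : ℂ) (m : ℂ → ℂ → ℂ) :
    firstOrderOp κ α β m (fun x y => (p * x + q * y) * gaussian A B C x y) u v =
      (p * u + q * v) * firstOrderOp κ α β m (gaussian A B C) u v +
        κ * (α * p + β * q) * gaussian A B C u v :=
  firstOrderOp_linear_mul κ α β p q m _ u v (hasDerivAt_gaussian_fst A B C u v).differentiableAt
    (hasDerivAt_gaussian_snd A B C u v).differentiableAt

end Gaussian

noncomputable def vacuum (ℏ δ δ' c : ℂ) (u v : ℂ) : ℂ :=
  exp ((1 / (I * ℏ)) * (δ' * u ^ 2 - 2 * (1 + c) * u * v + δ * v ^ 2) / ((1 + c) ^ 2 - δ * δ'))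

noncomputable def barVacuum (ℏ δ δ' c : ℂ) (u v : ℂ) : ℂ :=
  exp ((1 / (I * ℏ)) * (δ' * u ^ 2 + 2 * (1 - c) * u * v + δ * v ^ 2) / ((1 - c) ^ 2 - δ * δ'))

theorem vacuum_eq_gaussian (ℏ δ δ' c : ℂ) :
    vacuum ℏ δ δ' c = gaussian (1 / (I * ℏ) * δ' / ((1 + c) ^ 2 - δ * δ'))
      (1 / (I * ℏ) * (-2 * (1 + c)) / ((1 + c) ^ 2 - δ * δ'))
      (1 / (I * ℏ) * δ / ((1 + c) ^ 2 - δ * δ')) := by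
  ext u v
  rw [vacuum, gaussian]
  congr 1
  ring

theorem barVacuum_eq_gaussian (ℏ δ δ' c : ℂ) :
    barVacuum ℏ δ δ' c = gaussian (1 / (I * ℏ) * δ' / ((1 - c) ^ 2 - δ * δ'))
      (1 / (I * ℏ) * (2 * (1 - c)) / ((1 - c) ^ 2 - δ * δ'))
      (1 / (I * ℏ) * δ / ((1 - c) ^ 2 - δ * δ')) := by
  ext u v
  rw [barVacuum, gaussian]
  congr 1
  ring

section Vacuum

variable {ℏ δ δ' c : ℂ} (hℏ : ℏ ≠ 0)
include hℏ

theorem Ru_vacuum (h1 : (1 + c) ^ 2 ≠ δ * δ') (u v : ℂ) : Ru ℏ δ δ' c (vacuum ℏ δ δ' c) u v = 0 := by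
  rw [vacuum_eq_gaussian, Ru_eq_firstOrderOp, firstOrderOp_gaussian]
  refine mul_eq_zero_of_left ?_ _
  field_simp
  ring

theorem Rv_vacuum (h1 : (1 + c) ^ 2 ≠ δ * δ') (u v : ℂ) :
    Rv ℏ δ δ' c (vacuum ℏ δ δ' c) u v =
      (-2 * δ' / ((1 + c) ^ 2 - δ * δ') * u + 2 * (1 + c) / ((1 + c) ^ 2 - δ * δ') * v) *
        vacuum ℏ δ δ' c u v := by
  -- `field_simp` normalises the denominator to this form
  have hD : (1 + c) ^ 2 - δ' * δ ≠ 0 := by rw [mul_comm]; exact sub_ne_zero_of_ne h1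
  rw [vacuum_eq_gaussian, Rv_eq_firstOrderOp, firstOrderOp_gaussian]
  congr 1
  field_simp
  ring

theorem Ru_Rv_vacuum (h1 : (1 + c) ^ 2 ≠ δ * δ') (u v : ℂ) :
    Ru ℏ δ δ' c (Rv ℏ δ δ' c (vacuum ℏ δ δ' c)) u v = I * ℏ * vacuum ℏ δ δ' c u v := by
  have hD : (1 + c) ^ 2 - δ' * δ ≠ 0 := by rw [mul_comm]; exact sub_ne_zero_of_ne h1
  rw [show Rv ℏ δ δ' c (vacuum ℏ δ δ' c) = _ from funext₂ (Rv_vacuum hℏ h1), vacuum_eq_gaussian,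
    Ru_eq_firstOrderOp, firstOrderOp_linear_mul_gaussian, ← Ru_eq_firstOrderOp,
    ← vacuum_eq_gaussian, Ru_vacuum hℏ h1]
  field_simp
  ring

theorem Lu_barVacuum (h2 : (1 - c) ^ 2 ≠ δ * δ') (u v : ℂ) :
    Lu ℏ δ δ' c (barVacuum ℏ δ δ' c) u v = 0 := by
  rw [barVacuum_eq_gaussian, Lu_eq_firstOrderOp, firstOrderOp_gaussian]
  refine mul_eq_zero_of_left ?_ _
  field_simp
  ring

theorem Lv_barVacuum (h2 : (1 - c) ^ 2 ≠ δ * δ') (u v : ℂ) :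
    Lv ℏ δ δ' c (barVacuum ℏ δ δ' c) u v =
      (2 * δ' / ((1 - c) ^ 2 - δ * δ') * u + 2 * (1 - c) / ((1 - c) ^ 2 - δ * δ') * v) *
        barVacuum ℏ δ δ' c u v := by
  have hD : (1 - c) ^ 2 - δ' * δ ≠ 0 := by rw [mul_comm]; exact sub_ne_zero_of_ne h2
  rw [barVacuum_eq_gaussian, Lv_eq_firstOrderOp, firstOrderOp_gaussian]
  congr 1
  field_simp
  ring

theorem Lu_Lv_barVacuum (h2 : (1 - c) ^ 2 ≠ δ * δ') (u v : ℂ) :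
    Lu ℏ δ δ' c (Lv ℏ δ δ' c (barVacuum ℏ δ δ' c)) u v = -(I * ℏ) * barVacuum ℏ δ δ' c u v := by
  have hD : (1 - c) ^ 2 - δ' * δ ≠ 0 := by rw [mul_comm]; exact sub_ne_zero_of_ne h2
  rw [show Lv ℏ δ δ' c (barVacuum ℏ δ δ' c) = _ from funext₂ (Lv_barVacuum hℏ h2),
    barVacuum_eq_gaussian, Lu_eq_firstOrderOp, firstOrderOp_linear_mul_gaussian,
    ← Lu_eq_firstOrderOp, ← barVacuum_eq_gaussian, Lu_barVacuum hℏ h2]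
  field_simp
  ring

end Vacuum

/-- For the `K`-ordered expressions `ϖ₀₀` and `ϖ̄₀₀` of the vacuum and bar-vacuum:
`R_u(R_v ϖ₀₀) = iℏ·ϖ₀₀` and `L_u(L_v ϖ̄₀₀) = −iℏ·ϖ̄₀₀`; together with `R_u ϖ₀₀ = 0` and
`L_u ϖ̄₀₀ = 0` these express the eigenvalue identities
`ϖ₀₀ ∗ (1/(iℏ))u∘v = ½ϖ₀₀` and `(1/(iℏ))u∘v ∗ ϖ̄₀₀ = −½ϖ̄₀₀`. -/
theorem statement7 (ℏ δ δ' c : ℂ) (hℏ : ℏ ≠ 0)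
    (h1 : (1 + c) ^ 2 ≠ δ * δ') (h2 : (1 - c) ^ 2 ≠ δ * δ')
    (ϖ ϖbar : ℂ → ℂ → ℂ)
    (hϖ : ∀ u v, ϖ u v = exp ((1 / (Complex.I * ℏ)) *
      (δ' * u ^ 2 - 2 * (1 + c) * u * v + δ * v ^ 2) / ((1 + c) ^ 2 - δ * δ')))
    (hϖbar : ∀ u v, ϖbar u v = exp ((1 / (Complex.I * ℏ)) *
      (δ' * u ^ 2 + 2 * (1 - c) * u * v + δ * v ^ 2) / ((1 - c) ^ 2 - δ * δ'))) :
    (∀ u v : ℂ, Ru ℏ δ δ' c (fun x y => Rv ℏ δ δ' c ϖ x y) u v =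
      Complex.I * ℏ * ϖ u v) ∧
    (∀ u v : ℂ, Lu ℏ δ δ' c (fun x y => Lv ℏ δ δ' c ϖbar x y) u v =
      -(Complex.I * ℏ) * ϖbar u v) ∧
    (∀ u v : ℂ, Ru ℏ δ δ' c ϖ u v = 0) ∧
    (∀ u v : ℂ, Lu ℏ δ δ' c ϖbar u v = 0) := by
  obtain rfl : ϖ = vacuum ℏ δ δ' c := funext₂ hϖ
  obtain rfl : ϖbar = barVacuum ℏ δ δ' c := funext₂ hϖbar
  exact ⟨Ru_Rv_vacuum hℏ h1, Lu_Lv_barVacuum hℏ h2, Ru_vacuum hℏ h1, Lu_barVacuum hℏ h2⟩
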